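/- arXiv:2408.10218 — 4 statements merged into one kernel-verified Lean document; each statement's English description precedes it below -/
import Mathlib

section
/- Let S ⊂ ℝ^p be a finite set and let (S_n) be a sequence of finite subsets of ℝ^p with dist(S_n, S) → 0. Then there exists N ∈ ℕ such that for all n ≥ N one can write S_n = {s_n^1, …, s_n^{|S|}} with lim_{n→∞} s_n^i = s^i ∈ S for each i, where s^i ≠ s^j whenever i ≠ j; moreover, for every s ∈ S there exists a sequence (s_n) with s_n ∈ S_n and lim_{n→∞} s_n = s. -/
/-!
For each `x ∈ S` pick a nearest point of `Sn n` to `x`; its distance to `x` is at most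
`infDist x (Sn n) ≤ finsetDist (Sn n) S → 0`, so these points converge to `x`. Sequences with
distinct limits are eventually distinct, so for large `n` the nearest points of the `|S|` points
of `S` form `|S|` distinct elements of `Sn n`, and once `finsetDist (Sn n) S < 1` the set `Sn n`
has exactly `|S|` elements, so they exhaust it.
-/

open Filter Metric

noncomputable def finsetDist {p : ℕ} (A B : Finset (EuclideanSpace ℝ (Fin p))) : ℝ :=
  (if A.card = B.card then 0 else 1)
    + ∑ a ∈ A, infDist a (B : Set (EuclideanSpace ℝ (Fin p)))
    + ∑ b ∈ B, infDist b (A : Set (EuclideanSpace ℝ (Fin p)))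

open Topology Function

theorem eventually_injective_of_tendsto {ι X α : Type*} [Finite ι] [TopologicalSpace X]
    [T2Space X] {l : Filter α} {f : ι → α → X} {L : ι → X} (hL : Injective L)
    (hf : ∀ i, Tendsto (f i) l (𝓝 (L i))) : ∀ᶠ a in l, Injective fun i => f i a := by
  have hne : ∀ i j, ∀ᶠ a in l, i ≠ j → f i a ≠ f j a := fun i j => by
    by_cases hij : i = j
    · exact Eventually.of_forall fun _ h => (h hij).elim
    · exact ((hf i).prodMk_nhds (hf j)).eventually
        ((isOpen_ne_fun continuous_fst continuous_snd).eventually_mem (hL.ne hij))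
        |>.mono fun _ h _ => h
  filter_upwards [eventually_all.2 fun i => eventually_all.2 (hne i)] with a ha i j
  exact not_imp_not.1 (ha i j)

theorem Finset.coe_eq_range_of_injective {ι α : Type*} [Fintype ι] {A : Finset α} {f : ι → α}
    (hf : Injective f) (hmem : ∀ i, f i ∈ A) (hcard : A.card = Fintype.card ι) :
    (A : Set α) = Set.range f := by
  classical
  have hsub : Finset.univ.image f ⊆ A := Finset.image_subset_iff.2 fun i _ => hmem i
  rw [← Finset.eq_of_subset_of_card_le hsub (by rw [Finset.card_image_of_injective _ hf, hcard,
    Finset.card_univ]), Finset.coe_image, Finset.coe_univ, Set.image_univ]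

section finsetDist

variable {p : ℕ} {A B : Finset (EuclideanSpace ℝ (Fin p))}

theorem infDist_le_finsetDist {b : EuclideanSpace ℝ (Fin p)} (hb : b ∈ B) :
    infDist b A ≤ finsetDist A B := by
  have h₁ : 0 ≤ ∑ a ∈ A, infDist a (B : Set (EuclideanSpace ℝ (Fin p))) :=
    Finset.sum_nonneg fun _ _ => infDist_nonneg
  have h₂ := Finset.single_le_sum (f := fun b => infDist b (A : Set (EuclideanSpace ℝ (Fin p))))
    (fun _ _ => infDist_nonneg) hb
  unfold finsetDist
  split_ifs <;> linarith

theorem card_eq_of_finsetDist_lt_one (h : finsetDist A B < 1) : A.card = B.card := by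
  by_contra hne
  have h₁ : 0 ≤ ∑ a ∈ A, infDist a (B : Set (EuclideanSpace ℝ (Fin p))) :=
    Finset.sum_nonneg fun _ _ => infDist_nonneg
  have h₂ : 0 ≤ ∑ b ∈ B, infDist b (A : Set (EuclideanSpace ℝ (Fin p))) :=
    Finset.sum_nonneg fun _ _ => infDist_nonneg
  simp only [finsetDist, if_neg hne] at h
  linarith

end finsetDist

theorem exists_seq_tendsto_of_tendsto_finsetDist {p : ℕ} {S : Finset (EuclideanSpace ℝ (Fin p))}
    {Sn : ℕ → Finset (EuclideanSpace ℝ (Fin p))}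
    (hconv : Tendsto (fun n => finsetDist (Sn n) S) atTop (𝓝 0)) :
    ∃ t : EuclideanSpace ℝ (Fin p) → ℕ → EuclideanSpace ℝ (Fin p), ∀ x ∈ S,
      (∀ᶠ n in atTop, t x n ∈ Sn n) ∧ Tendsto (t x) atTop (𝓝 x) := by
  have hnearest : ∀ x n, ∃ y, (Sn n).Nonempty → y ∈ Sn n ∧ infDist x (Sn n) = dist x y :=
    fun x n => by
      by_cases h : (Sn n).Nonempty
      · obtain ⟨y, hy, hxy⟩ := (Sn n).finite_toSet.isCompact.exists_infDist_eq_dist h x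
        exact ⟨y, fun _ => ⟨hy, hxy⟩⟩
      · exact ⟨x, fun h' => (h h').elim⟩
  choose t ht using hnearest
  refine ⟨t, fun x hx => ?_⟩
  have hne : ∀ᶠ n in atTop, (Sn n).Nonempty :=
    (hconv.eventually_lt_const one_pos).mono fun n hn => by
      rw [← Finset.card_pos, card_eq_of_finsetDist_lt_one hn]
      exact Finset.card_pos.2 ⟨x, hx⟩
  refine ⟨hne.mono fun n hn => (ht x n hn).1, tendsto_iff_dist_tendsto_zero.2 ?_⟩
  refine squeeze_zero' (Eventually.of_forall fun _ => dist_nonneg) ?_ hconv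
  filter_upwards [hne] with n hn
  rw [dist_comm, ← (ht x n hn).2]
  exact infDist_le_finsetDist hx

/-- If `S` is a finite subset of `ℝ^p` and `Sn` is a sequence of finite
subsets with `dist(Sn n, S) → 0`, then for some `N` and all `n ≥ N` one can enumerate
`Sn n = {s 0 n, …, s (|S|-1) n}` (an injective enumeration), each `fun n => s i n`
converging to a point `L i ∈ S` with `L` injective; moreover every `x ∈ S` is the limit
of a sequence of points `t n ∈ Sn n`. -/
theorem stmt1 {p : ℕ} (S : Finset (EuclideanSpace ℝ (Fin p)))
    (Sn : ℕ → Finset (EuclideanSpace ℝ (Fin p)))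
    (hconv : Tendsto (fun n => finsetDist (Sn n) S) atTop (nhds 0)) :
    ∃ N : ℕ, ∃ s : Fin S.card → ℕ → EuclideanSpace ℝ (Fin p),
      ∃ L : Fin S.card → EuclideanSpace ℝ (Fin p),
      (∀ n ≥ N, Function.Injective (fun i => s i n) ∧
        (Sn n : Set (EuclideanSpace ℝ (Fin p))) = Set.range (fun i => s i n)) ∧
      (∀ i, L i ∈ S ∧ Tendsto (fun n => s i n) atTop (nhds (L i))) ∧
      Function.Injective L ∧
      (∀ x ∈ S, ∃ t : ℕ → EuclideanSpace ℝ (Fin p),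
        (∀ n ≥ N, t n ∈ Sn n) ∧ Tendsto t atTop (nhds x)) := by
  obtain ⟨t, ht⟩ := exists_seq_tendsto_of_tendsto_finsetDist hconv
  let L : Fin S.card → EuclideanSpace ℝ (Fin p) := fun i => S.equivFin.symm i
  have hLS : ∀ i, L i ∈ S := fun i => (S.equivFin.symm i).2
  have hL : Injective L := Subtype.val_injective.comp S.equivFin.symm.injective
  have hcard : ∀ᶠ n in atTop, (Sn n).card = S.card :=
    (hconv.eventually_lt_const one_pos).mono fun _ => card_eq_of_finsetDist_lt_one
  have hinj : ∀ᶠ n in atTop, Injective fun i => t (L i) n :=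
    eventually_injective_of_tendsto hL fun i => (ht _ (hLS i)).2
  have hmem : ∀ᶠ n in atTop, ∀ x ∈ S, t x n ∈ Sn n :=
    (eventually_all_finset S).2 fun x hx => (ht x hx).1
  obtain ⟨N, hN⟩ := eventually_atTop.1 (hcard.and (hinj.and hmem))
  refine ⟨N, fun i => t (L i), L, fun n hn => ?_, fun i => ⟨hLS i, (ht _ (hLS i)).2⟩, hL,
    fun x hx => ⟨t x, fun n hn => (hN n hn).2.2 x hx, (ht x hx).2⟩⟩
  obtain ⟨hc, hi, hm⟩ := hN n hn
  exact ⟨hi, Finset.coe_eq_range_of_injective hi (fun i => hm _ (hLS i)) (by simpa using hc)⟩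
end

section
/- A polynomial function on ℝ^n (i.e. a real multivariate polynomial in n variables), for any n ∈ ℕ, is either identically zero or its zero set {x ∈ ℝ^n : P(x) = 0} has Lebesgue measure zero. -/
/-!
Induction on the number of variables. Write `P` as a polynomial in `x₀` whose coefficients are
polynomials in the remaining variables `y`. Its leading coefficient is a nonzero polynomial in
fewer variables, so by induction it vanishes only on a null set of `y`; for every other `y` the
slice `{x₀ | P (x₀, y) = 0}` is the root set of a nonzero univariate polynomial, hence finite.
Fubini then makes the whole zero set null.
-/

open MeasureTheory

theorem Polynomial.map_ne_zero_of_map_leadingCoeff_ne_zero {R S : Type*} [Semiring R] [Semiring S]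
    {p : Polynomial R} {f : R →+* S} (h : f p.leadingCoeff ≠ 0) : p.map f ≠ 0 := fun hp =>
  h (by simpa using congrArg (Polynomial.coeff · p.natDegree) hp)

theorem MeasureTheory.Measure.measure_prod_null_of_ae_null_symm {α β : Type*} [MeasurableSpace α]
    [MeasurableSpace β] {μ : Measure α} {ν : Measure β} [SFinite μ] [SFinite ν]
    {s : Set (α × β)} (hs : MeasurableSet s)
    (h : ∀ᵐ y ∂ν, μ ((fun x => (x, y)) ⁻¹' s) = 0) : μ.prod ν s = 0 := by
  rw [Measure.prod_apply_symm hs, lintegral_congr_ae h, lintegral_zero]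

namespace MvPolynomial

variable {R : Type*} [CommRing R] [TopologicalSpace R] [IsTopologicalRing R]
  [SecondCountableTopology R] [MeasurableSpace R] [BorelSpace R]

theorem measurableSet_setOf_eval_eq_zero [T1Space R] {σ : Type*} [Countable σ]
    (P : MvPolynomial σ R) : MeasurableSet {x : σ → R | eval x P = 0} :=
  (continuous_eval P).measurable (measurableSet_singleton 0)

theorem measure_pi_setOf_eval_eq_zero [IsDomain R] [T1Space R] {n : ℕ}
    (μ : Fin n → Measure R) [∀ i, SigmaFinite (μ i)] [∀ i, NullSingletonClass (μ i)]
    {P : MvPolynomial (Fin n) R} (hP : P ≠ 0) :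
    Measure.pi μ {x | eval x P = 0} = 0 := by
  induction n with
  | zero =>
    obtain ⟨c, rfl⟩ : ∃ c, P = C c := ⟨_, eq_C_of_isEmpty P⟩
    simp_all
  | succ n ih =>
    set Q := finSuccEquiv R n P
    have hQ : Q ≠ 0 := by simpa [Q] using hP
    have hgeneric : ∀ᵐ y ∂Measure.pi fun j => μ (Fin.succAbove 0 j),
        eval y Q.leadingCoeff ≠ 0 := by
      simpa [ae_iff] using
        ih (fun j => μ (Fin.succAbove 0 j)) (Polynomial.leadingCoeff_ne_zero.2 hQ)
    have hpres := (measurePreserving_piFinSuccAbove μ 0).symm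
    rw [← hpres.measure_preimage (measurableSet_setOf_eval_eq_zero P).nullMeasurableSet]
    refine Measure.measure_prod_null_of_ae_null_symm
      ((measurableSet_setOf_eval_eq_zero P).preimage hpres.measurable) ?_
    filter_upwards [hgeneric] with y hy
    have hslice : (fun t => (t, y)) ⁻¹' (MeasurableEquiv.piFinSuccAbove (fun _ => R) 0).symm ⁻¹'
        {x | eval x P = 0} = {t | (Q.map (eval y)).eval t = 0} := by
      ext t
      simp [MeasurableEquiv.piFinSuccAbove, Fin.consEquiv, Q, ← eval_eq_eval_mv_eval']
    rw [hslice]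
    exact (Polynomial.finite_setOfPred_isRoot
      (Polynomial.map_ne_zero_of_map_leadingCoeff_ne_zero hy)).measure_zero _

end MvPolynomial

/-- A real multivariate polynomial in `n` variables is either identically
zero or its zero set in `ℝ^n` has Lebesgue measure zero. -/
theorem stmt4 (n : ℕ) (P : MvPolynomial (Fin n) ℝ) :
    P = 0 ∨ MeasureTheory.volume {x : Fin n → ℝ | MvPolynomial.eval x P = 0} = 0 :=
  or_iff_not_imp_left.2 fun hP =>
    MvPolynomial.measure_pi_setOf_eval_eq_zero (fun _ => volume) hP
end

section
/- Suppose A is a real p×p matrix of rank p−1 such that its last row A_{p,·} is linearly independent of every subset of p−2 other rows of A, and let A_{p,·} = Σ_{u=1}^{p−1} c_u A_{u,·} be the unique decomposition of the last row in span{A_{1,·}, …, A_{p−1,·}}. Let (A(n)) be a sequence of real p×p matrices, each of rank p−1 and each with the property that A_{p,·}(n) is linearly independent of every subset of p−2 other rows of A(n), such that ‖A − A(n)‖ → 0 (for any matrix norm ‖·‖), and let A_{p,·}(n) = Σ_{u=1}^{p−1} c_u(n) A_{u,·}(n) be the corresponding unique decompositions. Then c_u(n) → c_u as n → ∞ for each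 u = 1, …, p−1. -/
/-!
The coefficients are recovered from the rows by a continuous formula. If the rows `B` of a
matrix are linearly independent, the Gram matrix `B Bᵀ` is invertible and `d = (d B) Bᵀ (B Bᵀ)⁻¹`.
The rank hypothesis, together with the decomposition of the last row, makes the first `p − 1`
rows of `A` independent; invertibility of the Gram matrix is an open condition, so the formula
holds for `A n` with `n` large and passes to the limit.
-/

open Filter Topology Matrix

namespace Matrix

variable {m n ι R : Type*} [Fintype m] [Fintype n]

theorem linearIndependent_row_of_rank_eq_card [Field R] (M : Matrix m n R)
    (h : M.rank = Fintype.card m) : LinearIndependent R M.row :=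
  linearIndependent_iff_card_eq_finrank_span.2 <| by
    rw [Set.finrank, ← rank_eq_finrank_span_row, h]

theorem rank_submatrix_row_eq_of_mem_span [Field R] [Finite ι] (A : Matrix ι n R) (r : m → ι)
    (h : ∀ i, A i ∈ Submodule.span R (Set.range (A.submatrix r id).row)) :
    (A.submatrix r id).rank = A.rank := by
  have hspan : Submodule.span R (Set.range (A.submatrix r id).row) =
      Submodule.span R (Set.range A.row) := by
    refine le_antisymm (Submodule.span_mono ?_) (Submodule.span_le.2 (Set.range_subset_iff.2 h))
    rintro _ ⟨u, rfl⟩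
    exact ⟨r u, rfl⟩
  rw [rank_eq_finrank_span_row, rank_eq_finrank_span_row, hspan]

theorem isUnit_mul_transpose_of_linearIndependent [DecidableEq m] [Field R] [LinearOrder R]
    [IsStrictOrderedRing R] {B : Matrix m n R} (hB : LinearIndependent R B.row) :
    IsUnit (B * Bᵀ) :=
  linearIndependent_rows_iff_isUnit.1 <| linearIndependent_row_of_rank_eq_card _ <| by
    rw [rank_self_mul_transpose, hB.rank_matrix]

theorem vecMul_vecMul_transpose_inv [DecidableEq m] [CommRing R]
    {B : Matrix m n R} (hB : IsUnit (B * Bᵀ).det) (d : m → R) :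
    d ᵥ* B ᵥ* Bᵀ ᵥ* (B * Bᵀ)⁻¹ = d := by
  rw [vecMul_vecMul, vecMul_vecMul, ← Matrix.mul_assoc, mul_nonsing_inv _ hB, vecMul_one]

theorem tendsto_of_tendsto_vecMul [DecidableEq m] {l : Filter ι}
    {B : ι → Matrix m n ℝ} {B₀ : Matrix m n ℝ} (hB : Tendsto B l (𝓝 B₀))
    (hB₀ : LinearIndependent ℝ B₀.row) {d : ι → m → ℝ} {d₀ : m → ℝ}
    (hd : Tendsto (fun i => d i ᵥ* B i) l (𝓝 (d₀ ᵥ* B₀))) : Tendsto d l (𝓝 d₀) := by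
  set gram : Matrix m n ℝ → Matrix m m ℝ := fun M => M * Mᵀ
  have hgram : Continuous gram := continuous_id.matrix_mul continuous_id.matrix_transpose
  have hdet₀ : (gram B₀).det ≠ 0 :=
    ((isUnit_mul_transpose_of_linearIndependent hB₀).map detMonoidHom).ne_zero
  have hdet : ∀ᶠ i in l, (gram (B i)).det ≠ 0 :=
    ((continuous_id.matrix_det.comp hgram).tendsto B₀ |>.comp hB).eventually_ne hdet₀
  have hinv : ContinuousAt Inv.inv (gram B₀) :=
    continuousAt_matrix_inv _ <| by rw [Ring.inverse_eq_inv']; exact continuousAt_inv₀ hdet₀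
  have hproj : Tendsto (fun i => d i ᵥ* B i ᵥ* (B i)ᵀ) l (𝓝 (d₀ ᵥ* B₀ ᵥ* B₀ᵀ)) :=
    ((continuous_fst.matrix_vecMul continuous_snd.matrix_transpose).tendsto _).comp
      (hd.prodMk_nhds hB)
  have hformula : Tendsto (fun i => d i ᵥ* B i ᵥ* (B i)ᵀ ᵥ* (gram (B i))⁻¹) l
      (𝓝 (d₀ ᵥ* B₀ ᵥ* B₀ᵀ ᵥ* (gram B₀)⁻¹)) :=
    ((continuous_fst.matrix_vecMul continuous_snd).tendsto _).comp
      (hproj.prodMk_nhds (hinv.tendsto.comp (hgram.tendsto B₀ |>.comp hB)))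
  rw [vecMul_vecMul_transpose_inv (Ne.isUnit hdet₀)] at hformula
  refine hformula.congr' ?_
  filter_upwards [hdet] with i hi
  exact vecMul_vecMul_transpose_inv (Ne.isUnit hi) _

end Matrix

/-- Let `A` be a real `p×p` matrix of rank `p−1` whose last row lies
outside the span of every set of `p−2` other rows, and let
`A_{p,·} = Σ_{u<p-1} c_u A_{u,·}` be the (unique) decomposition of its last row in the
span of the first `p−1` rows.  If `A n → A` is a sequence of `p×p` matrices with the same
two properties, with decompositions `A_{p,·}(n) = Σ_u c_u(n) A_{u,·}(n)`, then
`c_u(n) → c_u` for every `u`.  (Convergence of matrices is entrywise, which by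
equivalence of all matrix norms on a finite-dimensional space is convergence in any
matrix norm.) -/
theorem stmt9 (p : ℕ) (hp : 2 ≤ p) (A : Matrix (Fin p) (Fin p) ℝ)
    (hrank : A.rank = p - 1)
    (c : Fin (p - 1) → ℝ)
    (hc : A ⟨p - 1, by omega⟩ =
      ∑ u : Fin (p - 1), c u • A (Fin.castLE (Nat.sub_le p 1) u))
    (An : ℕ → Matrix (Fin p) (Fin p) ℝ)
    (cn : ℕ → Fin (p - 1) → ℝ)
    (hcn : ∀ n, An n ⟨p - 1, by omega⟩ =
      ∑ u : Fin (p - 1), cn n u • An n (Fin.castLE (Nat.sub_le p 1) u))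
    (hconv : Tendsto An atTop (nhds A)) :
    ∀ u : Fin (p - 1), Tendsto (fun n => cn n u) atTop (nhds (c u)) := by
  set q : Fin p := ⟨p - 1, by omega⟩
  set r : Fin (p - 1) → Fin p := Fin.castLE (Nat.sub_le p 1)
  have hvecMul (M : Matrix (Fin p) (Fin p) ℝ) (d : Fin (p - 1) → ℝ)
      (hd : M q = ∑ u, d u • M (r u)) : d ᵥ* M.submatrix r id = M q := by
    rw [vecMul_eq_sum, hd]
    rfl
  have hspan (i : Fin p) : A i ∈ Submodule.span ℝ (Set.range (A.submatrix r id).row) := by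
    by_cases hi : (i : ℕ) < p - 1
    · exact Submodule.subset_span ⟨⟨i, hi⟩, rfl⟩
    · rw [show i = q from Fin.ext (by simp only [q]; omega), hc]
      exact Submodule.sum_mem _ fun u _ => Submodule.smul_mem _ _ (Submodule.subset_span ⟨u, rfl⟩)
  have hli : LinearIndependent ℝ (A.submatrix r id).row :=
    linearIndependent_row_of_rank_eq_card _ <| by
      rw [rank_submatrix_row_eq_of_mem_span A r hspan, hrank, Fintype.card_fin]
  have hrows : Tendsto (fun n => (An n).submatrix r id) atTop (𝓝 (A.submatrix r id)) :=
    ((continuous_id.matrix_submatrix r id).tendsto A).comp hconv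
  have hlast : Tendsto (fun n => An n q) atTop (𝓝 (A q)) :=
    ((continuous_apply q).tendsto A).comp hconv
  have hcombo : Tendsto (fun n => cn n ᵥ* (An n).submatrix r id) atTop
      (𝓝 (c ᵥ* A.submatrix r id)) := by
    simpa only [hvecMul _ _ (hcn _), hvecMul A c hc] using hlast
  exact tendsto_pi_nhds.1 (tendsto_of_tendsto_vecMul hrows hli hcombo)
end

section
/- Let Y_1, …, Y_k be square-integrable real random variables and X_1, …, X_k random vectors in ℝ^p with square-integrable entries, with each G^u = E[X_u X_u^T] positive definite, and let R_u(β) = E[(Y_u − βX_u)^2]. Let κ_i, κ_j ≥ 0 and w_i, w_j ∈ ℝ^k be weight vectors, each either entrywise nonnegative with a positive entry or entrywise nonpositive with a negative entry, and suppose at least one of w_i, w_j is of the nonnegative type. Set f_i(β) = κ_i + Σ_u w_i(u) R_u(β) and f_j(β) = κ_j + Σ_u w_j(u) R_u(β). If the intersection set K = {β ∈ ℝ^p : f_i(β) = f_j(β)} is nonempty, then f_i attains its infimum on K: there exists β* ∈ K with f_i(β*) = inf_{β∈K} f_i(β). -/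
/-!
Each risk is the quadratic `β ↦ E[Y²] - 2 β ⬝ E[Y X] + β ⬝ G β`, hence continuous, and it tends to
infinity away from compact sets because its second-moment matrix `G` is positive definite. A
combination `κ + Σ_u w(u) R_u` with nonnegative weights, one of them positive, dominates
`κ + w(u₀) R_{u₀}` and is therefore coercive as well. The set `K` is closed, so that combination
attains its minimum on `K`; since `f_i = f_j` on `K`, a minimiser of whichever of `f_i`, `f_j`
has nonnegative weights also minimises `f_i` there.
-/

open MeasureTheory Filter Matrix

section Quadratic

variable {n : Type*} [Fintype n]

lemma abs_dotProduct_le_sum_abs_mul_norm (x c : n → ℝ) : |x ⬝ᵥ c| ≤ (∑ i, |c i|) * ‖x‖ := by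
  rw [Finset.sum_mul]
  refine (Finset.abs_sum_le_sum_abs _ _).trans (Finset.sum_le_sum fun i _ => ?_)
  rw [abs_mul, mul_comm]
  exact mul_le_mul_of_nonneg_left (by simpa using norm_le_pi_norm x i) (abs_nonneg _)

lemma Matrix.PosDef.exists_pos_mul_sq_norm_le {M : Matrix n n ℝ} (hM : M.PosDef) :
    ∃ m > 0, ∀ x, m * ‖x‖ ^ 2 ≤ x ⬝ᵥ M *ᵥ x := by
  rcases subsingleton_or_nontrivial (n → ℝ) with hn | hn
  · exact ⟨1, one_pos, fun x => by simp [Subsingleton.elim x 0]⟩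
  have hq : Continuous fun x : n → ℝ => x ⬝ᵥ M *ᵥ x := by fun_prop
  obtain ⟨x₁, hx₁, hmin⟩ := (isCompact_sphere (0 : n → ℝ) 1).exists_isMinOn
    (NormedSpace.sphere_nonempty.mpr zero_le_one) hq.continuousOn
  have hx₁0 : x₁ ≠ 0 := ne_zero_of_mem_unit_sphere ⟨x₁, hx₁⟩
  refine ⟨_, by simpa using hM.dotProduct_mulVec_pos hx₁0, fun x => ?_⟩
  rcases eq_or_ne x 0 with rfl | hx
  · simp
  have hnx : 0 < ‖x‖ := norm_pos_iff.mpr hx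
  have hunit : ‖x‖⁻¹ • x ∈ Metric.sphere (0 : n → ℝ) 1 := by
    rw [mem_sphere_zero_iff_norm, norm_smul, norm_inv, norm_norm, inv_mul_cancel₀ hnx.ne']
  have hscaled : x₁ ⬝ᵥ M *ᵥ x₁ ≤ (‖x‖⁻¹ • x) ⬝ᵥ M *ᵥ (‖x‖⁻¹ • x) := hmin hunit
  simp only [mulVec_smul, dotProduct_smul, smul_dotProduct, smul_eq_mul] at hscaled
  calc x₁ ⬝ᵥ M *ᵥ x₁ * ‖x‖ ^ 2 ≤ ‖x‖⁻¹ * (‖x‖⁻¹ * (x ⬝ᵥ M *ᵥ x)) * ‖x‖ ^ 2 := by gcongr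
    _ = x ⬝ᵥ M *ᵥ x := by field_simp

lemma Matrix.PosDef.tendsto_cocompact_quadratic {M : Matrix n n ℝ} (hM : M.PosDef) (a : ℝ)
    (c : n → ℝ) : Tendsto (fun x => a - 2 * (x ⬝ᵥ c) + x ⬝ᵥ M *ᵥ x) (cocompact _) atTop := by
  obtain ⟨m, hm, hmM⟩ := hM.exists_pos_mul_sq_norm_le
  set C := ∑ i, |c i|
  have hpoly : Tendsto (fun t : ℝ => a + t * (m * t - 2 * C)) atTop atTop :=
    tendsto_atTop_add_const_left _ _ <| tendsto_id.atTop_mul_atTop₀ <|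
      tendsto_atTop_add_const_right _ _ (tendsto_id.const_mul_atTop hm)
  refine tendsto_atTop_mono (fun x => ?_) (hpoly.comp tendsto_norm_cocompact_atTop)
  have hlin := abs_le.mp (abs_dotProduct_le_sum_abs_mul_norm x c)
  have hquad := hmM x
  simp only [Function.comp_apply]
  nlinarith

end Quadratic

lemma exists_isMinOn_of_tendsto_cocompact {E : Type*} [TopologicalSpace E] {f : E → ℝ}
    {K : Set E} (hf : Continuous f) (hlim : Tendsto f (cocompact E) atTop) (hK : IsClosed K)
    (hne : K.Nonempty) : ∃ x ∈ K, IsMinOn f K x :=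
  let ⟨_, hx₀⟩ := hne
  hf.continuousOn.exists_isMinOn' hK hx₀ ((hlim.eventually_ge_atTop _).filter_mono inf_le_left)

section Risk

variable {Ω ι : Type*} [MeasurableSpace Ω] {μ : Measure Ω} [Fintype ι]

lemma integrable_dotProduct {f : Ω → ι → ℝ} (hf : ∀ i, Integrable (fun ω => f ω i) μ)
    (β : ι → ℝ) : Integrable (fun ω => β ⬝ᵥ f ω) μ :=
  integrable_finsetSum _ fun i _ => (hf i).const_mul _

lemma integral_dotProduct {f : Ω → ι → ℝ} (hf : ∀ i, Integrable (fun ω => f ω i) μ)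
    (β : ι → ℝ) : ∫ ω, β ⬝ᵥ f ω ∂μ = β ⬝ᵥ fun i => ∫ ω, f ω i ∂μ := by
  simp only [dotProduct]
  rw [integral_finsetSum _ fun i _ => (hf i).const_mul _]
  simp only [integral_const_mul]

noncomputable def risk (μ : Measure Ω) (Y : Ω → ℝ) (X : Ω → ι → ℝ) (β : ι → ℝ) : ℝ :=
  ∫ ω, (Y ω - β ⬝ᵥ X ω) ^ 2 ∂μ

noncomputable def secondMoment (μ : Measure Ω) (X : Ω → ι → ℝ) : Matrix ι ι ℝ :=
  Matrix.of fun i j => ∫ ω, X ω i * X ω j ∂μ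

lemma risk_nonneg (Y : Ω → ℝ) (X : Ω → ι → ℝ) (β : ι → ℝ) : 0 ≤ risk μ Y X β :=
  integral_nonneg fun _ => sq_nonneg _

lemma risk_eq_quadratic {Y : Ω → ℝ} {X : Ω → ι → ℝ} (hY : MemLp Y 2 μ)
    (hX : ∀ i, MemLp (fun ω => X ω i) 2 μ) (β : ι → ℝ) :
    risk μ Y X β = ∫ ω, Y ω ^ 2 ∂μ - 2 * (β ⬝ᵥ fun i => ∫ ω, Y ω * X ω i ∂μ)
      + β ⬝ᵥ secondMoment μ X *ᵥ β := by
  have hYX : ∀ i, Integrable (fun ω => Y ω * X ω i) μ := fun i => hY.integrable_mul (hX i)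
  have hXX i : ∀ j, Integrable (fun ω => X ω i * X ω j) μ :=
    fun j => (hX i).integrable_mul (hX j)
  have hpointwise ω : (Y ω - β ⬝ᵥ X ω) ^ 2 = Y ω ^ 2 - 2 * (β ⬝ᵥ fun i => Y ω * X ω i)
      + β ⬝ᵥ fun i => β ⬝ᵥ fun j => X ω i * X ω j := by
    have hlin : Y ω * β ⬝ᵥ X ω = β ⬝ᵥ fun i => Y ω * X ω i := by
      simp only [dotProduct, Finset.mul_sum, mul_left_comm]
    have hsq : (β ⬝ᵥ X ω) ^ 2 = β ⬝ᵥ fun i => β ⬝ᵥ fun j => X ω i * X ω j := by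
      simp only [sq, dotProduct, Finset.mul_sum, Finset.sum_mul]
      exact Finset.sum_congr rfl fun i _ => Finset.sum_congr rfl fun j _ => by ring
    rw [sub_sq, mul_assoc, hlin, hsq]
  have hlinI := integrable_dotProduct hYX β
  rw [risk, integral_congr_ae (ae_of_all _ hpointwise),
    integral_add (hY.integrable_sq.sub' (hlinI.const_mul 2))
      (integrable_dotProduct (fun i => integrable_dotProduct (hXX i) β) β),
    integral_sub hY.integrable_sq (hlinI.const_mul 2), integral_const_mul,
    integral_dotProduct hYX, integral_dotProduct fun i => integrable_dotProduct (hXX i) β]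
  congr 2
  ext i
  rw [mulVec, dotProduct_comm, integral_dotProduct (hXX i)]
  rfl

lemma continuous_risk {Y : Ω → ℝ} {X : Ω → ι → ℝ} (hY : MemLp Y 2 μ)
    (hX : ∀ i, MemLp (fun ω => X ω i) 2 μ) : Continuous (risk μ Y X) := by
  rw [funext (risk_eq_quadratic hY hX)]
  fun_prop

lemma tendsto_risk_cocompact {Y : Ω → ℝ} {X : Ω → ι → ℝ} (hY : MemLp Y 2 μ)
    (hX : ∀ i, MemLp (fun ω => X ω i) 2 μ) (hG : (secondMoment μ X).PosDef) :
    Tendsto (risk μ Y X) (cocompact _) atTop := by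
  rw [funext (risk_eq_quadratic hY hX)]
  exact hG.tendsto_cocompact_quadratic _ _

variable {ν : Type*} [Fintype ν] {Y : ν → Ω → ℝ} {X : ν → Ω → ι → ℝ}

lemma continuous_const_add_sum_mul_risk (hY : ∀ u, MemLp (Y u) 2 μ)
    (hX : ∀ u i, MemLp (fun ω => X u ω i) 2 μ) (κ : ℝ) (w : ν → ℝ) :
    Continuous fun β => κ + ∑ u, w u * risk μ (Y u) (X u) β := by
  have := fun u => continuous_risk (hY u) (hX u)
  fun_prop

lemma tendsto_const_add_sum_mul_risk_cocompact {w : ν → ℝ} (hw : ∀ u, 0 ≤ w u) {u₀ : ν}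
    (hu₀ : 0 < w u₀) (hY : MemLp (Y u₀) 2 μ) (hX : ∀ i, MemLp (fun ω => X u₀ ω i) 2 μ)
    (hG : (secondMoment μ (X u₀)).PosDef) (κ : ℝ) :
    Tendsto (fun β => κ + ∑ u, w u * risk μ (Y u) (X u) β) (cocompact _) atTop := by
  refine tendsto_atTop_add_const_left _ κ <| tendsto_atTop_mono (fun β => ?_)
    ((tendsto_risk_cocompact hY hX hG).const_mul_atTop hu₀)
  exact Finset.single_le_sum (f := fun u => w u * risk μ (Y u) (X u) β)
    (fun u _ => mul_nonneg (hw u) (risk_nonneg _ _ _)) (Finset.mem_univ u₀)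

end Risk

theorem stmt15_general {Ω : Type*} [MeasurableSpace Ω] {μ : Measure Ω}
    (p k : ℕ)
    (Y : Fin k → Ω → ℝ) (hY : ∀ u, MemLp (Y u) 2 μ)
    (X : Fin k → Ω → Fin p → ℝ) (hX : ∀ u i, MemLp (fun ω => X u ω i) 2 μ)
    (hG : ∀ u : Fin k,
      (Matrix.of fun i j : Fin p => ∫ ω, X u ω i * X u ω j ∂μ).PosDef)
    (κi κj : ℝ) (wi wj : Fin k → ℝ)
    (hpos : ((∀ u, 0 ≤ wi u) ∧ ∃ u, 0 < wi u) ∨ ((∀ u, 0 ≤ wj u) ∧ ∃ u, 0 < wj u))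
    (fi fj : (Fin p → ℝ) → ℝ)
    (hfi : ∀ β, fi β = κi + ∑ u, wi u * ∫ ω, (Y u ω - ∑ l, β l * X u ω l) ^ 2 ∂μ)
    (hfj : ∀ β, fj β = κj + ∑ u, wj u * ∫ ω, (Y u ω - ∑ l, β l * X u ω l) ^ 2 ∂μ)
    (hK : {β : Fin p → ℝ | fi β = fj β}.Nonempty) :
    ∃ βstar ∈ {β : Fin p → ℝ | fi β = fj β},
      ∀ β ∈ {β : Fin p → ℝ | fi β = fj β}, fi βstar ≤ fi β := by
  have hfi' : fi = fun β => κi + ∑ u, wi u * risk μ (Y u) (X u) β := funext hfi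
  have hfj' : fj = fun β => κj + ∑ u, wj u * risk μ (Y u) (X u) β := funext hfj
  have hfi_cont : Continuous fi := hfi' ▸ continuous_const_add_sum_mul_risk hY hX κi wi
  have hfj_cont : Continuous fj := hfj' ▸ continuous_const_add_sum_mul_risk hY hX κj wj
  have hKc : IsClosed {β | fi β = fj β} := isClosed_eq hfi_cont hfj_cont
  rcases hpos with ⟨hw, u₀, hu₀⟩ | ⟨hw, u₀, hu₀⟩
  · have hlim : Tendsto fi (cocompact _) atTop :=
      hfi' ▸ tendsto_const_add_sum_mul_risk_cocompact hw hu₀ (hY u₀) (hX u₀) (hG u₀) κi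
    obtain ⟨β₀, hβ₀, hmin⟩ := exists_isMinOn_of_tendsto_cocompact hfi_cont hlim hKc hK
    exact ⟨β₀, hβ₀, isMinOn_iff.mp hmin⟩
  · have hlim : Tendsto fj (cocompact _) atTop :=
      hfj' ▸ tendsto_const_add_sum_mul_risk_cocompact hw hu₀ (hY u₀) (hX u₀) (hG u₀) κj
    obtain ⟨β₀, hβ₀, hmin⟩ := exists_isMinOn_of_tendsto_cocompact hfj_cont hlim hKc hK
    exact ⟨β₀, hβ₀, fun β hβ => (hβ₀.trans_le (hmin hβ)).trans_eq hβ.symm⟩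

/-- With risks `R_u(β) = E[(Y_u − βX_u)²]` built from square-integrable
data with positive definite second-moment matrices, and two affine combinations
`f_i(β) = κ_i + Σ_u w_i(u) R_u(β)`, `f_j(β) = κ_j + Σ_u w_j(u) R_u(β)` whose weight
vectors are each either entrywise nonnegative with a positive entry or entrywise
nonpositive with a negative entry, at least one of the two of the nonnegative type:
if the intersection set `K = {β : f_i(β) = f_j(β)}` is nonempty, then `f_i` attains
its infimum on `K`. -/
theorem stmt15 {Ω : Type*} [MeasurableSpace Ω] {μ : Measure Ω} [IsProbabilityMeasure μ]
    (p k : ℕ)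
    (Y : Fin k → Ω → ℝ) (hY : ∀ u, MemLp (Y u) 2 μ)
    (X : Fin k → Ω → Fin p → ℝ) (hX : ∀ u i, MemLp (fun ω => X u ω i) 2 μ)
    (hG : ∀ u : Fin k,
      (Matrix.of fun i j : Fin p => ∫ ω, X u ω i * X u ω j ∂μ).PosDef)
    (κi κj : ℝ) (hκi : 0 ≤ κi) (hκj : 0 ≤ κj) (wi wj : Fin k → ℝ)
    (hwi : ((∀ u, 0 ≤ wi u) ∧ ∃ u, 0 < wi u) ∨ ((∀ u, wi u ≤ 0) ∧ ∃ u, wi u < 0))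
    (hwj : ((∀ u, 0 ≤ wj u) ∧ ∃ u, 0 < wj u) ∨ ((∀ u, wj u ≤ 0) ∧ ∃ u, wj u < 0))
    (hpos : ((∀ u, 0 ≤ wi u) ∧ ∃ u, 0 < wi u) ∨ ((∀ u, 0 ≤ wj u) ∧ ∃ u, 0 < wj u))
    (fi fj : (Fin p → ℝ) → ℝ)
    (hfi : ∀ β, fi β = κi + ∑ u, wi u * ∫ ω, (Y u ω - ∑ l, β l * X u ω l) ^ 2 ∂μ)
    (hfj : ∀ β, fj β = κj + ∑ u, wj u * ∫ ω, (Y u ω - ∑ l, β l * X u ω l) ^ 2 ∂μ)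
    (hK : {β : Fin p → ℝ | fi β = fj β}.Nonempty) :
    ∃ βstar ∈ {β : Fin p → ℝ | fi β = fj β},
      ∀ β ∈ {β : Fin p → ℝ | fi β = fj β}, fi βstar ≤ fi β :=
  stmt15_general p k Y hY X hX hG κi κj wi wj hpos fi fj hfi hfj hK
end
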